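/- Let α > 0 and n ≥ 1 an integer. Let X, θ, Q be random variables on a probability space (Ω, ℙ) such that: X has distribution δ_1^{△_α n}; θ has the Pareto distribution π_{2α}; θ is independent of the pair (X, Q); Q takes values in {0,1}; and ℙ({Q = 1} ∩ {X ∈ B}) = ∫_B x^{−α} (δ_1^{△_α n})(dx) for every Borel set B ⊆ [1,∞). Then the random variable X · θ^Q has distribution δ_1^{△_α (n+1)}. -/

import Mathlib

open MeasureTheory Set

/-- The Pareto probability measure `π_{2α}` on `ℝ`, with density
`2α x^(-(2α+1)) 1_{(1,∞)}(x)` with respect to Lebesgue measure. -/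
noncomputable def pareto (α : ℝ) : Measure ℝ :=
  volume.withDensity
    (fun x => ENNReal.ofReal (if 1 < x then 2 * α * x ^ (-(2 * α) - 1) else 0))

/-- The Kendall probability kernel `ρ_{a,b} = (1 - (a/b)^α) δ_b + (a/b)^α T_b π_{2α}`
for `0 ≤ a ≤ b` (with `ρ_{0,0} = δ_0`). -/
noncomputable def kendallKernelLe (α a b : ℝ) : Measure ℝ :=
  if b = 0 then Measure.dirac 0
  else ENNReal.ofReal (1 - (a / b) ^ α) • Measure.dirac b
      + ENNReal.ofReal ((a / b) ^ α) • Measure.map (fun x => b * x) (pareto α)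

/-- The Kendall kernel `ρ_{x,y}`, extended symmetrically. -/
noncomputable def kendallKernel (α x y : ℝ) : Measure ℝ :=
  kendallKernelLe α (min x y) (max x y)

/-- The Kendall convolution `λ △_α ν`, defined by
`(λ △_α ν)(A) = ∫∫ ρ_{x,y}(A) λ(dx) ν(dy)`. -/
noncomputable def kendallConv (α : ℝ) (lam ν : Measure ℝ) : Measure ℝ :=
  lam.bind (fun x => ν.bind (fun y => kendallKernel α x y))

/-- The `n`-fold Kendall convolution power `ν^{△_α n}`, with `ν^{△_α 0} = δ_0`. -/
noncomputable def kendallPow (α : ℝ) (ν : Measure ℝ) : ℕ → Measure ℝ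
  | 0 => Measure.dirac 0
  | n + 1 => kendallConv α (kendallPow α ν n) ν

/-- The Kendall–Williamson transform `Φ_ν(t) = ∫ (1 - (t s)^α)_+ ν(ds)`. -/
noncomputable def williamson (α : ℝ) (ν : Measure ℝ) (t : ℝ) : ℝ :=
  ∫ s, max (1 - (t * s) ^ α) 0 ∂ν


/-!
For `x ≥ 1` the kernel `ρ_{x,1}` keeps `x` with probability `1 - x^(-α)` and otherwise multiplies
it by an independent `π_{2α}` variable. Since `δ_1^{△_α n}` lives on `[1,∞)`, the law
`δ_1^{△_α (n+1)}` is therefore the part of `μ = δ_1^{△_α n}` with density `1 - x^(-α)` plus the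
image under `(x, t) ↦ x t` of (`μ` with density `x^(-α)`) ⊗ `π_{2α}`. The law of `X θ^Q` splits
in the same way along `{Q = 1}`: the hypothesis on `Q` identifies the law of `X` on `{Q = 1}` as
`μ` with density `x^(-α)` (hence on `{Q ≠ 1}` as the rest of `μ`), and independence makes the law
of `(X, θ)` on `{Q = 1}` a product measure.
-/

open scoped ENNReal

instance (α : ℝ) : SFinite (pareto α) := by
  unfold pareto
  infer_instance

lemma ae_one_lt_pareto (α : ℝ) : ∀ᵐ t ∂pareto α, 1 < t := by
  rw [pareto, ae_withDensity_iff
    (Measurable.ite measurableSet_Ioi (by fun_prop) measurable_const).ennreal_ofReal]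
  refine ae_of_all _ fun t ht => ?_
  by_contra h
  simp [if_neg h] at ht

lemma measurable_kendallKernelLe (α : ℝ) :
    Measurable fun p : ℝ × ℝ => kendallKernelLe α p.1 p.2 := by
  refine Measure.measurable_of_measurable_coe _ fun s hs => ?_
  have hpareto : Measurable fun b : ℝ => pareto α ((b * ·) ⁻¹' s) :=
    measurable_measure_prodMk_left ((measurable_fst.mul measurable_snd) hs)
  simp only [kendallKernelLe, apply_ite (fun μ : Measure ℝ => μ s), Measure.add_apply,
    Measure.smul_apply, smul_eq_mul, Measure.map_apply (measurable_const_mul _) hs]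
  refine Measurable.ite (measurableSet_eq_fun measurable_snd measurable_const) measurable_const ?_
  have hdirac : Measurable fun b : ℝ => Measure.dirac b s :=
    (Measure.measurable_coe hs).comp Measure.measurable_dirac
  exact ((by fun_prop : Measurable fun p : ℝ × ℝ => ENNReal.ofReal (1 - (p.1 / p.2) ^ α)).mul
    (hdirac.comp measurable_snd)).add
    ((by fun_prop : Measurable fun p : ℝ × ℝ => ENNReal.ofReal ((p.1 / p.2) ^ α)).mul
    (hpareto.comp measurable_snd))

lemma measurable_kendallKernel (α : ℝ) : Measurable (Function.uncurry (kendallKernel α)) :=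
  (measurable_kendallKernelLe α).comp
    ((measurable_fst.min measurable_snd).prodMk (measurable_fst.max measurable_snd))

lemma kendallConv_dirac_one_eq_bind (α : ℝ) (μ : Measure ℝ) :
    kendallConv α μ (Measure.dirac 1) = μ.bind fun x => kendallKernel α x 1 := by
  simp only [kendallConv]
  congr 1
  funext x
  exact Measure.dirac_bind (measurable_kendallKernel α).of_uncurry_left 1

lemma kendallKernel_one_eq_of_one_le {α x : ℝ} (hx : 1 ≤ x) :
    kendallKernel α x 1 = ENNReal.ofReal (1 - x ^ (-α)) • Measure.dirac x
      + ENNReal.ofReal (x ^ (-α)) • (pareto α).map (x * ·) := by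
  have hx0 : 0 < x := zero_lt_one.trans_le hx
  rw [kendallKernel, min_eq_right hx, max_eq_left hx, kendallKernelLe, if_neg hx0.ne',
    one_div, Real.inv_rpow hx0.le, ← Real.rpow_neg hx0.le]

lemma kendallConv_dirac_one_eq_add (α : ℝ) {μ : Measure ℝ} (hμ : ∀ᵐ x ∂μ, 1 ≤ x) :
    kendallConv α μ (Measure.dirac 1)
      = μ.withDensity (fun x => 1 - ENNReal.ofReal (x ^ (-α)))
        + ((μ.withDensity fun x => ENNReal.ofReal (x ^ (-α))).prod (pareto α)).map
            (fun p => p.1 * p.2) := by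
  ext s hs
  have hmul : Measurable fun p : ℝ × ℝ => p.1 * p.2 := measurable_fst.mul measurable_snd
  rw [kendallConv_dirac_one_eq_bind, Measure.bind_apply hs
      (measurable_kendallKernel α).of_uncurry_right.aemeasurable,
    Measure.add_apply, withDensity_apply _ hs, Measure.map_apply hmul hs,
    Measure.prod_apply (hmul hs), lintegral_withDensity_eq_lintegral_mul _ (by fun_prop)
      (measurable_measure_prodMk_left (hmul hs)),
    ← lintegral_indicator hs, ← lintegral_add_left (by fun_prop)]
  refine lintegral_congr_ae (hμ.mono fun x hx => ?_)
  simp only [kendallKernel_one_eq_of_one_le hx, Measure.add_apply, Measure.smul_apply, smul_eq_mul,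
    Measure.map_apply (measurable_const_mul x) hs, Measure.dirac_apply' _ hs, Pi.mul_apply,
    ENNReal.ofReal_sub _ (Real.rpow_nonneg (zero_le_one.trans hx) _), ENNReal.ofReal_one]
  congr 1
  by_cases hxs : x ∈ s <;> simp [hxs]

lemma kendallPow_dirac_one_one {α : ℝ} (hα : 0 < α) :
    kendallPow α (Measure.dirac 1) 1 = Measure.dirac 1 := by
  change kendallConv α (Measure.dirac 0) (Measure.dirac 1) = _
  rw [kendallConv_dirac_one_eq_bind,
    Measure.dirac_bind (measurable_kendallKernel α).of_uncurry_right, kendallKernel, min_eq_left zero_le_one, max_eq_right zero_le_one, kendallKernelLe,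
    if_neg one_ne_zero, zero_div, Real.zero_rpow hα.ne']
  simp

lemma ae_one_le_kendallPow_dirac_one {α : ℝ} (hα : 0 < α) {n : ℕ} (hn : 1 ≤ n) :
    ∀ᵐ x ∂kendallPow α (Measure.dirac 1) n, 1 ≤ x := by
  induction n, hn using Nat.le_induction with
  | base => simp [kendallPow_dirac_one_one hα]
  | succ m _ ih =>
    have hjump := (withDensity_absolutelyContinuous _ fun x => ENNReal.ofReal (x ^ (-α))).ae_le ih
    rw [kendallPow, kendallConv_dirac_one_eq_add α ih, ae_add_measure_iff]
    refine ⟨(withDensity_absolutelyContinuous _ _).ae_le ih, ?_⟩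
    rw [ae_map_iff (by fun_prop) measurableSet_Ici,
      Measure.ae_prod_iff_ae_ae (measurableSet_le measurable_const (by fun_prop))]
    filter_upwards [hjump] with x hx
    filter_upwards [ae_one_lt_pareto α] with t ht
    nlinarith

section Probability

variable {Ω β γ δ : Type*} [MeasurableSpace Ω] [MeasurableSpace β] [MeasurableSpace γ]
  [MeasurableSpace δ] {P : Measure Ω}

lemma ProbabilityTheory.IndepFun.map_restrict_preimage_prod [IsFiniteMeasure P]
    {θ : Ω → β} {X : Ω → γ} {Q : Ω → δ} (hθ : Measurable θ) (hX : Measurable X)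
    (hind : ProbabilityTheory.IndepFun θ (fun ω => (X ω, Q ω)) P) {A : Set δ}
    (hA : MeasurableSet A) :
    (P.restrict (Q ⁻¹' A)).map (fun ω => (X ω, θ ω))
      = ((P.restrict (Q ⁻¹' A)).map X).prod (P.map θ) := by
  refine (Measure.prod_eq fun s t hs ht => ?_).symm
  have hXQ : (fun ω => (X ω, Q ω)) ⁻¹' s ×ˢ A = X ⁻¹' s ∩ Q ⁻¹' A := rfl
  rw [Measure.map_apply (hX.prodMk hθ) (hs.prod ht),
    Measure.restrict_apply ((hX.prodMk hθ) (hs.prod ht)), Measure.map_apply hX hs,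
    Measure.restrict_apply (hX hs), Measure.map_apply hθ ht, ← hXQ, mul_comm,
    ← hind.measure_inter_preimage_eq_mul _ _ ht (hs.prod hA)]
  congr 1
  ext ω
  simp [and_comm, and_assoc]

lemma map_restrict_eq_withDensity_of_forall_subset {X : Ω → γ} (hX : Measurable X)
    {E : Set Ω} {S : Set γ} (hS : MeasurableSet S) (hXS : ∀ᵐ x ∂P.map X, x ∈ S)
    {f : γ → ℝ≥0∞}
    (hf : ∀ B, MeasurableSet B → B ⊆ S → P (E ∩ X ⁻¹' B) = ∫⁻ x in B, f x ∂P.map X) :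
    (P.restrict E).map X = (P.map X).withDensity f := by
  ext B hB
  have hXS' : ∀ᵐ ω ∂P, X ω ∈ S := ae_of_ae_map hX.aemeasurable hXS
  rw [Measure.map_apply hX hB, Measure.restrict_apply (hX hB), withDensity_apply _ hB]
  calc P (X ⁻¹' B ∩ E) = P (X ⁻¹' B ∩ E ∩ X ⁻¹' S) :=
        (measure_congr (inter_ae_eq_left_of_ae_eq_univ (Filter.eventuallyEq_univ.2 hXS'))).symm
    _ = P (E ∩ X ⁻¹' (B ∩ S)) := by rw [preimage_inter]; ac_rfl
    _ = ∫⁻ x in B ∩ S, f x ∂P.map X := hf _ (hB.inter hS) inter_subset_right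
    _ = ∫⁻ x in B, f x ∂P.map X :=
        setLIntegral_congr (inter_ae_eq_left_of_ae_eq_univ (Filter.eventuallyEq_univ.2 hXS))

lemma map_restrict_compl_eq_withDensity [IsFiniteMeasure P] {X : Ω → γ} (hX : Measurable X)
    {E : Set Ω} (hE : MeasurableSet E) {f : γ → ℝ≥0∞} (hf : Measurable f)
    (hf_le : ∀ᵐ x ∂P.map X, f x ≤ 1) (h : (P.restrict E).map X = (P.map X).withDensity f) :
    (P.restrict Eᶜ).map X = (P.map X).withDensity fun x => 1 - f x := by
  ext B hB
  have hfB : P (X ⁻¹' B ∩ E) = ∫⁻ x in B, f x ∂P.map X := by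
    rw [← Measure.restrict_apply (hX hB), ← Measure.map_apply hX hB, h, withDensity_apply _ hB]
  rw [Measure.map_apply hX hB, Measure.restrict_apply (hX hB), withDensity_apply _ hB,
    lintegral_sub hf (hfB ▸ measure_ne_top _ _) (ae_restrict_of_ae hf_le), setLIntegral_one,
    ← hfB, Measure.map_apply hX hB, ← sdiff_eq]
  exact ENNReal.eq_sub_of_add_eq (measure_ne_top _ _)
    (by rw [add_comm, measure_inter_add_sdiff _ hE])

lemma map_mul_rpow_eq_add {X θ Q : Ω → ℝ} (hX : Measurable X) (hθ : Measurable θ)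
    (hQ : Measurable Q) (hQ01 : ∀ ω, Q ω = 0 ∨ Q ω = 1) :
    P.map (fun ω => X ω * θ ω ^ Q ω)
      = ((P.restrict (Q ⁻¹' {1})).map fun ω => (X ω, θ ω)).map (fun p => p.1 * p.2)
        + (P.restrict (Q ⁻¹' {1})ᶜ).map X := by
  have hE : MeasurableSet (Q ⁻¹' {1}) := hQ (measurableSet_singleton 1)
  conv_lhs => rw [← Measure.restrict_add_restrict_compl (μ := P) hE]
  rw [Measure.map_add _ _ (by fun_prop), Measure.map_map (by fun_prop) (by fun_prop)]
  congr 1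
  · refine Measure.map_congr (ae_restrict_of_forall_mem hE fun ω (hω : Q ω = 1) => ?_)
    simp [hω]
  · refine Measure.map_congr (ae_restrict_of_forall_mem hE.compl fun ω (hω : Q ω ≠ 1) => ?_)
    simp [(hQ01 ω).resolve_right hω]

end Probability

/-- One-step representation of the Kendall random walk with unit step `δ_1`: if `X` has
distribution `δ_1^{△_α n}`, `θ` has the Pareto distribution `π_{2α}` and is independent of
`(X, Q)`, `Q` takes values in `{0,1}`, and `ℙ({Q = 1} ∩ {X ∈ B}) = ∫_B x^(-α) dδ_1^{△_α n}`
for every Borel `B ⊆ [1,∞)`, then `X · θ^Q` has distribution `δ_1^{△_α (n+1)}`. -/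
theorem kendall_walk_step_dirac
    {Ω : Type*} [MeasurableSpace Ω] (ℙ : Measure Ω) [IsProbabilityMeasure ℙ]
    (α : ℝ) (hα : 0 < α) (n : ℕ) (hn : 1 ≤ n)
    (X θ Q : Ω → ℝ) (hX : Measurable X) (hθ : Measurable θ) (hQ : Measurable Q)
    (hXlaw : Measure.map X ℙ = kendallPow α (Measure.dirac 1) n)
    (hθlaw : Measure.map θ ℙ = pareto α)
    (hindep : ProbabilityTheory.IndepFun θ (fun ω => (X ω, Q ω)) ℙ)
    (hQ01 : ∀ ω, Q ω = 0 ∨ Q ω = 1)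
    (hQ1 : ∀ B : Set ℝ, MeasurableSet B → B ⊆ Set.Ici 1 →
      ℙ ({ω | Q ω = 1} ∩ X ⁻¹' B)
        = ∫⁻ x in B, ENNReal.ofReal (x ^ (-α)) ∂(kendallPow α (Measure.dirac 1) n)) :
    Measure.map (fun ω => X ω * θ ω ^ Q ω) ℙ = kendallPow α (Measure.dirac 1) (n + 1) := by
  set μ := kendallPow α (Measure.dirac 1) n
  have hμ : ∀ᵐ x ∂μ, 1 ≤ x := ae_one_le_kendallPow_dirac_one hα hn
  have hjump : (ℙ.restrict (Q ⁻¹' {1})).map X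
      = μ.withDensity fun x => ENNReal.ofReal (x ^ (-α)) := by
    rw [← hXlaw] at hμ hQ1 ⊢
    exact map_restrict_eq_withDensity_of_forall_subset hX measurableSet_Ici hμ hQ1
  have hstay : (ℙ.restrict (Q ⁻¹' {1})ᶜ).map X
      = μ.withDensity fun x => 1 - ENNReal.ofReal (x ^ (-α)) := by
    rw [← hXlaw] at hμ hjump ⊢
    refine map_restrict_compl_eq_withDensity hX (hQ (measurableSet_singleton 1)) (by fun_prop)
      (hμ.mono fun x hx => ?_) hjump
    exact ENNReal.ofReal_le_one.2 (Real.rpow_le_one_of_one_le_of_nonpos hx (by linarith))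
  rw [map_mul_rpow_eq_add hX hθ hQ hQ01,
    hindep.map_restrict_preimage_prod hθ hX (measurableSet_singleton 1), hjump, hstay, hθlaw,
    kendallPow, kendallConv_dirac_one_eq_add α hμ, add_comm]
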